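/- Let H be a finite-dimensional complex Hilbert space and 𝒱 a subgroup of the unitary group U(H), with closure 𝒱̄. Then the following four closed convex cones in the space L of linear maps End(H) → End(H) coincide: (i) the closure of the convex cone generated by {(A ↦ V A V* − A) : V ∈ 𝒱}; (ii) the closure of the convex cone generated by {(A ↦ V A V* − A) : V ∈ 𝒱̄}; (iii) the closure of the convex cone generated by {𝔘 − id : 𝔘 ∈ DM_ru(𝒱)}; (iv) the closure of the convex cone generated by {𝔘 − id : 𝔘 ∈ DM_ru(𝒱̄)}. -/

import Mathlib

/-- Conjugation `A ↦ V A V*` by an operator `V`, as a continuous linear map on `End(H)`. -/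
noncomputable def conjCLM {H : Type*} [NormedAddCommGroup H] [InnerProductSpace ℂ H]
    [FiniteDimensional ℂ H] (V : H →L[ℂ] H) :
    (H →L[ℂ] H) →L[ℂ] (H →L[ℂ] H) :=
  ContinuousLinearMap.mulLeftRight ℂ (H →L[ℂ] H) V (star V)

/-- The convex cone generated by a set `S` in a real vector space: the set of nonnegative
multiples of elements of the convex hull of `S`. -/
def coneGen {M : Type*} [AddCommMonoid M] [Module ℝ M] (S : Set M) : Set M :=
  {x | ∃ r : ℝ, 0 ≤ r ∧ ∃ y ∈ convexHull ℝ S, x = r • y}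

/-- `DMru 𝒲`: the convex hull, in the space of (continuous) linear maps on `End(H)`, of the set
of conjugations `A ↦ V A V*` with `V ∈ 𝒲`. -/
noncomputable def DMru {H : Type*} [NormedAddCommGroup H] [InnerProductSpace ℂ H]
    [FiniteDimensional ℂ H] (W : Set (H →L[ℂ] H)) :
    Set ((H →L[ℂ] H) →L[ℂ] (H →L[ℂ] H)) :=
  convexHull ℝ {T | ∃ V ∈ W, T = conjCLM V}

/-! Since `V ↦ (A ↦ V A V*)` is continuous, every generator `conj V - id` with `V ∈ closure 𝒱`
is a limit of generators with `V ∈ 𝒱`, and the closed convex cone of a set already contains the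
closure of the set. Subtracting `id` is a translation, so it commutes with convex hulls, and the
convex cone generated by the convex hull of a set is the one generated by the set: the `DMru`
cones are therefore the cones of the first two families. -/

section Cone

variable {M : Type*} [AddCommMonoid M] [Module ℝ M]

lemma coneGen_mono {S T : Set M} (h : S ⊆ T) : coneGen S ⊆ coneGen T := by
  rintro x ⟨r, hr, y, hy, rfl⟩
  exact ⟨r, hr, y, convexHull_mono h hy, rfl⟩

@[simp]
lemma coneGen_convexHull (S : Set M) : coneGen (convexHull ℝ S) = coneGen S := by
  simp only [coneGen, (convex_convexHull ℝ S).convexHull_eq]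

end Cone

section ClosedCone

variable {M : Type*} [AddCommGroup M] [Module ℝ M] [TopologicalSpace M]
  [IsTopologicalAddGroup M] [ContinuousConstSMul ℝ M]

lemma convexHull_closure_subset_closure_convexHull (S : Set M) :
    convexHull ℝ (closure S) ⊆ closure (convexHull ℝ S) :=
  convexHull_min (closure_mono (subset_convexHull ℝ S)) (convex_convexHull ℝ S).closure

lemma coneGen_closure_subset_closure_coneGen (S : Set M) :
    coneGen (closure S) ⊆ closure (coneGen S) := by
  rintro x ⟨r, hr, y, hy, rfl⟩
  exact map_mem_closure (continuous_const_smul r)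
    (convexHull_closure_subset_closure_convexHull S hy) fun z hz => ⟨r, hr, z, hz, rfl⟩

lemma closure_coneGen_eq_of_subset_of_subset_closure {S T : Set M} (hST : S ⊆ T)
    (hTS : T ⊆ closure S) : closure (coneGen S) = closure (coneGen T) :=
  (closure_mono (coneGen_mono hST)).antisymm <| closure_minimal
    ((coneGen_mono hTS).trans (coneGen_closure_subset_closure_coneGen S)) isClosed_closure

end ClosedCone

lemma image_sub_const_convexHull {E : Type*} [AddCommGroup E] [Module ℝ E] (S : Set E) (c : E) :
    (· - c) '' convexHull ℝ S = convexHull ℝ ((· - c) '' S) := by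
  rw [← Set.sub_singleton, ← Set.sub_singleton, convexHull_sub, convexHull_singleton]

section Conjugation

variable {H : Type*} [NormedAddCommGroup H] [InnerProductSpace ℂ H] [FiniteDimensional ℂ H]

lemma continuous_conjCLM : Continuous fun V : H →L[ℂ] H => conjCLM V :=
  (ContinuousLinearMap.mulLeftRight ℂ (H →L[ℂ] H)).continuous.clm_apply continuous_star

lemma image_sub_id_DMru (W : Set (H →L[ℂ] H)) :
    (· - ContinuousLinearMap.id ℂ (H →L[ℂ] H)) '' DMru W
      = convexHull ℝ {T | ∃ V ∈ W, T = conjCLM V - ContinuousLinearMap.id ℂ (H →L[ℂ] H)} := by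
  rw [DMru, image_sub_const_convexHull]
  congr 1
  ext T
  constructor
  · rintro ⟨_, ⟨V, hV, rfl⟩, rfl⟩
    exact ⟨V, hV, rfl⟩
  · rintro ⟨V, hV, rfl⟩
    exact ⟨conjCLM V, ⟨V, hV, rfl⟩, rfl⟩

lemma conjCLM_sub_id_mem_closure {W : Set (H →L[ℂ] H)} {V : H →L[ℂ] H} (hV : V ∈ closure W) :
    conjCLM V - ContinuousLinearMap.id ℂ (H →L[ℂ] H) ∈
      closure {T | ∃ V ∈ W, T = conjCLM V - ContinuousLinearMap.id ℂ (H →L[ℂ] H)} :=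
  map_mem_closure (f := fun V => conjCLM V - ContinuousLinearMap.id ℂ (H →L[ℂ] H))
    (continuous_conjCLM.sub continuous_const) hV fun U hU => ⟨U, hU, rfl⟩

lemma closure_coneGen_conj_sub_id_closure (W : Set (H →L[ℂ] H)) :
    closure (coneGen {T | ∃ V ∈ W, T = conjCLM V - ContinuousLinearMap.id ℂ (H →L[ℂ] H)})
      = closure (coneGen
        {T | ∃ V ∈ closure W, T = conjCLM V - ContinuousLinearMap.id ℂ (H →L[ℂ] H)}) := by
  refine closure_coneGen_eq_of_subset_of_subset_closure ?_ ?_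
  · rintro _ ⟨V, hV, rfl⟩
    exact ⟨V, subset_closure hV, rfl⟩
  · rintro _ ⟨V, hV, rfl⟩
    exact conjCLM_sub_id_mem_closure hV

end Conjugation

theorem four_cones_eq_general
    {H : Type*} [NormedAddCommGroup H] [InnerProductSpace ℂ H] [FiniteDimensional ℂ H]
    (𝒱 : Set (H →L[ℂ] H)) :
    closure (coneGen
        {T | ∃ V ∈ 𝒱, T = conjCLM V - ContinuousLinearMap.id ℂ (H →L[ℂ] H)})
      = closure (coneGen
        {T | ∃ V ∈ closure 𝒱, T = conjCLM V - ContinuousLinearMap.id ℂ (H →L[ℂ] H)}) ∧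
    closure (coneGen
        {T | ∃ V ∈ 𝒱, T = conjCLM V - ContinuousLinearMap.id ℂ (H →L[ℂ] H)})
      = closure (coneGen
        ((fun T => T - ContinuousLinearMap.id ℂ (H →L[ℂ] H)) '' DMru 𝒱)) ∧
    closure (coneGen
        {T | ∃ V ∈ 𝒱, T = conjCLM V - ContinuousLinearMap.id ℂ (H →L[ℂ] H)})
      = closure (coneGen
        ((fun T => T - ContinuousLinearMap.id ℂ (H →L[ℂ] H)) '' DMru (closure 𝒱))) := by
  refine ⟨closure_coneGen_conj_sub_id_closure 𝒱, ?_, ?_⟩ <;>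
    rw [image_sub_id_DMru, coneGen_convexHull]
  exact closure_coneGen_conj_sub_id_closure 𝒱

/-- For a subgroup `𝒱` of the unitary group of `H` with closure `𝒱̄`, the four
closed convex cones generated by `{conj V − id : V ∈ 𝒱}`, `{conj V − id : V ∈ 𝒱̄}`,
`{𝔘 − id : 𝔘 ∈ DMru 𝒱}` and `{𝔘 − id : 𝔘 ∈ DMru 𝒱̄}` coincide. -/
theorem four_cones_eq
    {H : Type*} [NormedAddCommGroup H] [InnerProductSpace ℂ H] [FiniteDimensional ℂ H]
    (𝒱 : Set (H →L[ℂ] H))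
    (hsub : 𝒱 ⊆ unitary (H →L[ℂ] H))
    (h1 : (1 : H →L[ℂ] H) ∈ 𝒱)
    (hmul : ∀ v ∈ 𝒱, ∀ w ∈ 𝒱, v * w ∈ 𝒱)
    (hstar : ∀ v ∈ 𝒱, star v ∈ 𝒱) :
    closure (coneGen
        {T | ∃ V ∈ 𝒱, T = conjCLM V - ContinuousLinearMap.id ℂ (H →L[ℂ] H)})
      = closure (coneGen
        {T | ∃ V ∈ closure 𝒱, T = conjCLM V - ContinuousLinearMap.id ℂ (H →L[ℂ] H)}) ∧
    closure (coneGen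
        {T | ∃ V ∈ 𝒱, T = conjCLM V - ContinuousLinearMap.id ℂ (H →L[ℂ] H)})
      = closure (coneGen
        ((fun T => T - ContinuousLinearMap.id ℂ (H →L[ℂ] H)) '' DMru 𝒱)) ∧
    closure (coneGen
        {T | ∃ V ∈ 𝒱, T = conjCLM V - ContinuousLinearMap.id ℂ (H →L[ℂ] H)})
      = closure (coneGen
        ((fun T => T - ContinuousLinearMap.id ℂ (H →L[ℂ] H)) '' DMru (closure 𝒱))) :=
  four_cones_eq_general 𝒱
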